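/- arXiv:1808.07414 — 8 statements merged into one kernel-verified Lean document; each statement's English description precedes it below -/
import Mathlib

section
/- Let x ∈ ℂ^N and w ∈ ℂ^W with step size 0 < L < W, and let λ = (λ_0,…,λ_{L−1}) be nonzero complex numbers. Define the pair (x',w') by x'[n] = λ_{n mod L}·x[n] for 0 ≤ n ≤ N−1 and w'[n] = λ_{(L−n) mod L}^{−1}·w[n] for 0 ≤ n ≤ W−1. Then the blind STFT of (x',w') equals that of (x,w): ŷ'[k,m] = ŷ[k,m] for every integer k and every m = 0,…,M−1. -/
open Complex BigOperators

/-- Extension of a finite vector `w ∈ ℂ^W` to `ℤ` by zero outside `{0,…,W−1}`. -/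
noncomputable def zext {W : ℕ} (w : Fin W → ℂ) (j : ℤ) : ℂ :=
  if h : 0 ≤ j ∧ j < (W : ℤ) then w ⟨j.toNat, by omega⟩ else 0

/-- The blind short-time Fourier transform
`ŷ[k,m] = Σ_{n=0}^{N−1} x[n]·w[mL−n]·e^{−2πikn/N}`. -/
noncomputable def stft {N W : ℕ} (x : Fin N → ℂ) (w : Fin W → ℂ)
    (L : ℕ) (k : ℤ) (m : ℕ) : ℂ :=
  ∑ n : Fin N, x n * zext w ((m : ℤ) * L - (n : ℕ)) *
    Complex.exp (-(2 * (Real.pi : ℂ) * Complex.I * (k : ℂ) * ((n : ℕ) : ℂ)) / (N : ℂ))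

lemma cancel_aux (a b c : ℂ) (h : a ≠ 0) : a * b * (a⁻¹ * c) = b * c := by
  field_simp

lemma key_mod (n t L : ℕ) (hL : 0 < L) (h : (n + t) % L = 0) :
    (L - t % L) % L = n % L := by
  have ha : n % L < L := Nat.mod_lt _ hL
  have hb : t % L < L := Nat.mod_lt _ hL
  have hsum : (n % L + t % L) % L = 0 := by
    rw [Nat.add_mod] at h; simpa using h
  rcases Nat.lt_or_ge (n % L + t % L) L with hlt | hge
  · have : n % L + t % L = 0 := by rwa [Nat.mod_eq_of_lt hlt] at hsum
    have h1 : n % L = 0 := by omega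
    have h2 : t % L = 0 := by omega
    simp [h1, h2]
  · have hlt2 : n % L + t % L - L < L := by omega
    have : n % L + t % L - L = 0 := by
      rwa [Nat.mod_eq_sub_mod hge, Nat.mod_eq_of_lt hlt2] at hsum
    have hEq : n % L + t % L = L := by omega
    have htpos : 0 < t % L := by omega
    rw [Nat.mod_eq_of_lt (by omega)]
    omega

/-- the scaling action `x'[n] = λ_{n mod L}·x[n]`,
`w'[n] = λ_{(L−n) mod L}⁻¹·w[n]` preserves the blind STFT measurements. -/
theorem blind_stft_scaling_ambiguity
    {N W L : ℕ} (hL : 0 < L) (hLW : L < W)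
    (x x' : Fin N → ℂ) (w w' : Fin W → ℂ)
    (lam : Fin L → ℂ) (hlam : ∀ j, lam j ≠ 0)
    (hx' : ∀ n : Fin N, x' n = lam ⟨(n : ℕ) % L, Nat.mod_lt _ hL⟩ * x n)
    (hw' : ∀ n : Fin W, w' n = (lam ⟨(L - (n : ℕ) % L) % L, Nat.mod_lt _ hL⟩)⁻¹ * w n)
    (k : ℤ) (m : ℕ) (hm : m < (N + W - 1 + L - 1) / L) :
    stft x' w' L k m = stft x w L k m := by
  unfold stft
  refine Finset.sum_congr rfl fun n _ => ?_
  congr 1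
  set j : ℤ := (m : ℤ) * L - (n : ℕ) with hj
  by_cases hcond : 0 ≤ j ∧ j < (W : ℤ)
  · have hsum : ((n : ℕ) + j.toNat) % L = 0 := by
      have : (n : ℕ) + j.toNat = m * L := by omega
      rw [this]; exact Nat.mul_mod_left m L
    have hidx : (L - j.toNat % L) % L = (n : ℕ) % L :=
      key_mod _ _ _ hL hsum
    rw [hx' n]
    unfold zext
    rw [dif_pos hcond, dif_pos hcond, hw']
    have : (⟨(L - (j.toNat) % L) % L, Nat.mod_lt _ hL⟩ : Fin L)
        = ⟨(n : ℕ) % L, Nat.mod_lt _ hL⟩ := by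
      apply Fin.ext; exact hidx
    rw [this]
    exact cancel_aux _ _ _ (hlam _)
  · unfold zext
    rw [dif_neg hcond, dif_neg hcond, mul_zero, mul_zero]
end

section
/- Let x ∈ ℂ^N and w ∈ ℂ^W with step size 0 < L < W, let η_1, η_2 ∈ ℂ with |η_1| = |η_2| = 1, and let λ = (λ_0,…,λ_{L−1}) be nonzero complex numbers. Define (x',w') by x'[n] = η_1·η_2^n·λ_{n mod L}·x[n] for 0 ≤ n ≤ N−1 and w'[n] = η_2^n·λ_{(L−n) mod L}^{−1}·w[n] for 0 ≤ n ≤ W−1. Then the blind STFT of (x',w') satisfies ŷ'[k,m] = η_1·η_2^{mL}·ŷ[k,m] for every integer k and every m = 0,…,M−1; in particular |ŷ'[k,m]| = |ŷ[k,m]| for all k and m. -/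
open Complex BigOperators

/-!
Both transformed vectors multiply a summand `x[n]·w[mL−n]` of the STFT by phases and scalings
whose product depends only on `m`: the powers combine to `η₂^{n + (mL−n)} = η₂^{mL}`, and since
`n + (mL−n) ≡ 0 (mod L)` the index `(L − (mL−n) mod L) mod L` equals `n mod L`, so `λ_{n mod L}`
cancels against its inverse.
-/

theorem Nat.sub_mod_mod_eq_mod_of_dvd_add {L n j : ℕ} (h : L ∣ n + j) :
    (L - j % L) % L = n % L := by
  rcases Nat.eq_zero_or_pos L with rfl | hL
  · simp_all
  rw [← ZMod.natCast_eq_natCast_iff', Nat.cast_sub (Nat.mod_lt j hL).le, ZMod.natCast_self,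
    ZMod.natCast_mod]
  have hsum : ((n + j : ℕ) : ZMod L) = 0 := (ZMod.natCast_eq_zero_iff _ _).mpr h
  push_cast at hsum
  linear_combination -hsum

theorem zext_natCast {W : ℕ} (w : Fin W → ℂ) {j : ℕ} (hj : j < W) :
    zext w j = w ⟨j, hj⟩ := by
  simp [zext, hj]

theorem stft_eq_mul_of_forall_mul_zext {N W L : ℕ} {x x' : Fin N → ℂ} {w w' : Fin W → ℂ}
    {k : ℤ} {m : ℕ} (c : ℂ)
    (h : ∀ n : Fin N, x' n * zext w' ((m : ℤ) * L - (n : ℕ)) =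
      c * (x n * zext w ((m : ℤ) * L - (n : ℕ)))) :
    stft x' w' L k m = c * stft x w L k m := by
  simp only [stft, Finset.mul_sum, h, mul_assoc]

theorem ambiguity_factor_mul {L : ℕ} (hL : 0 < L) (lam : Fin L → ℂ) (η₁ η₂ : ℂ)
    (hlam : ∀ i, lam i ≠ 0) {n j : ℕ} (h : L ∣ n + j) :
    η₁ * η₂ ^ n * lam ⟨n % L, Nat.mod_lt _ hL⟩ *
        (η₂ ^ j * (lam ⟨(L - j % L) % L, Nat.mod_lt _ hL⟩)⁻¹) =
      η₁ * η₂ ^ (n + j) := by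
  have hidx : (⟨(L - j % L) % L, Nat.mod_lt _ hL⟩ : Fin L) = ⟨n % L, Nat.mod_lt _ hL⟩ :=
    Fin.ext (Nat.sub_mod_mod_eq_mod_of_dvd_add h)
  rw [hidx, pow_add]
  field_simp [hlam]

theorem mul_zext_ambiguity {N W L : ℕ} (hL : 0 < L) (lam : Fin L → ℂ) (η₁ η₂ : ℂ)
    (hlam : ∀ i, lam i ≠ 0)
    {x x' : Fin N → ℂ} {w w' : Fin W → ℂ}
    (hx' : ∀ n : Fin N, x' n = η₁ * η₂ ^ (n : ℕ) * lam ⟨(n : ℕ) % L, Nat.mod_lt _ hL⟩ * x n)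
    (hw' : ∀ n : Fin W, w' n = η₂ ^ (n : ℕ) *
      (lam ⟨(L - (n : ℕ) % L) % L, Nat.mod_lt _ hL⟩)⁻¹ * w n)
    (m : ℕ) (n : Fin N) :
    x' n * zext w' ((m : ℤ) * L - (n : ℕ)) =
      η₁ * η₂ ^ (m * L) * (x n * zext w ((m : ℤ) * L - (n : ℕ))) := by
  by_cases hsupp : 0 ≤ (m : ℤ) * L - (n : ℕ) ∧ (m : ℤ) * L - (n : ℕ) < W
  · obtain ⟨j, hj⟩ : ∃ j : ℕ, (m : ℤ) * L - (n : ℕ) = j :=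
      ⟨_, (Int.toNat_of_nonneg hsupp.1).symm⟩
    have hnj : (n : ℕ) + j = m * L := by omega
    have hjW : j < W := by omega
    rw [hj, zext_natCast _ hjW, zext_natCast _ hjW, hx', hw', ← hnj,
      ← ambiguity_factor_mul hL lam η₁ η₂ hlam (hnj ▸ Nat.dvd_mul_left L m)]
    ring
  · simp only [zext, dif_neg hsupp, mul_zero]

theorem blind_stft_phaseless_ambiguity_general
    {N W L : ℕ} (hL : 0 < L)
    (x x' : Fin N → ℂ) (w w' : Fin W → ℂ)
    (η₁ η₂ : ℂ) (hη₁ : ‖η₁‖ = 1) (hη₂ : ‖η₂‖ = 1)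
    (lam : Fin L → ℂ) (hlam : ∀ j, lam j ≠ 0)
    (hx' : ∀ n : Fin N, x' n = η₁ * η₂ ^ (n : ℕ) * lam ⟨(n : ℕ) % L, Nat.mod_lt _ hL⟩ * x n)
    (hw' : ∀ n : Fin W, w' n = η₂ ^ (n : ℕ) *
      (lam ⟨(L - (n : ℕ) % L) % L, Nat.mod_lt _ hL⟩)⁻¹ * w n)
    (k : ℤ) (m : ℕ) :
    stft x' w' L k m = η₁ * η₂ ^ (m * L) * stft x w L k m ∧
    ‖stft x' w' L k m‖ = ‖stft x w L k m‖ := by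
  have hcov : stft x' w' L k m = η₁ * η₂ ^ (m * L) * stft x w L k m :=
    stft_eq_mul_of_forall_mul_zext _ (mul_zext_ambiguity hL lam η₁ η₂ hlam hx' hw' m)
  refine ⟨hcov, ?_⟩
  rw [hcov, norm_mul, norm_mul, norm_pow, hη₁, hη₂, one_pow, one_mul, one_mul]

/-- the action `x'[n] = η₁·η₂ⁿ·λ_{n mod L}·x[n]`,
`w'[n] = η₂ⁿ·λ_{(L−n) mod L}⁻¹·w[n]` sends `ŷ[k,m]` to `η₁·η₂^{mL}·ŷ[k,m]`;
in particular it preserves the phaseless blind STFT measurements. -/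
theorem blind_stft_phaseless_ambiguity
    {N W L : ℕ} (hL : 0 < L) (hLW : L < W)
    (x x' : Fin N → ℂ) (w w' : Fin W → ℂ)
    (η₁ η₂ : ℂ) (hη₁ : ‖η₁‖ = 1) (hη₂ : ‖η₂‖ = 1)
    (lam : Fin L → ℂ) (hlam : ∀ j, lam j ≠ 0)
    (hx' : ∀ n : Fin N, x' n = η₁ * η₂ ^ (n : ℕ) * lam ⟨(n : ℕ) % L, Nat.mod_lt _ hL⟩ * x n)
    (hw' : ∀ n : Fin W, w' n = η₂ ^ (n : ℕ) *
      (lam ⟨(L - (n : ℕ) % L) % L, Nat.mod_lt _ hL⟩)⁻¹ * w n)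
    (k : ℤ) (m : ℕ) (hm : m < (N + W - 1 + L - 1) / L) :
    stft x' w' L k m = η₁ * η₂ ^ (m * L) * stft x w L k m ∧
    ‖stft x' w' L k m‖ = ‖stft x w L k m‖ :=
  blind_stft_phaseless_ambiguity_general hL x x' w w' η₁ η₂ hη₁ hη₂ lam hlam hx' hw' k m
end

section
/- Let N = W, let x, w ∈ ℂ^N, and let 0 < L < N be the step size. Define x'[n] = conj(w[n]) and w'[n] = conj(x[n]) for 0 ≤ n ≤ N−1. Then the phaseless blind STFT measurements of (x',w') coincide with those of (x,w): |ŷ'[k,m]| = |ŷ[k,m]| for every integer k and every m = 0,…,M−1. -/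
open Complex BigOperators

/-!
Reflecting the summation index `n ↦ mL − n` exchanges the roles of the signal and the window, and
turns the phase `e^{−2πikn/N}` into `e^{−2πikmL/N}` times its conjugate. Hence the STFT of
`(conj w, conj x)` is the conjugate of the STFT of `(x, w)` times a unimodular factor.
-/

open ComplexConjugate

noncomputable def dftPhase (N : ℕ) (k j : ℤ) : ℂ :=
  exp (-(2 * (Real.pi : ℂ) * I * k * j) / N)

theorem norm_dftPhase (N : ℕ) (k j : ℤ) : ‖dftPhase N k j‖ = 1 := by
  have : -(2 * (Real.pi : ℂ) * I * k * j) / N = ((-(2 * Real.pi * k * j / N) : ℝ) : ℂ) * I := by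
    push_cast
    ring
  rw [dftPhase, this, norm_exp_ofReal_mul_I]

theorem dftPhase_sub (N : ℕ) (k c j : ℤ) :
    dftPhase N k (c - j) = dftPhase N k c * conj (dftPhase N k j) := by
  simp only [dftPhase, ← exp_conj, ← exp_add, map_div₀, map_neg, map_mul, conj_ofReal, conj_I,
    map_intCast, map_natCast, map_ofNat]
  congr 1
  push_cast
  ring

theorem zext_natCast_s2 {W : ℕ} (v : Fin W → ℂ) (n : Fin W) : zext v (n : ℕ) = v n := by
  rw [zext, dif_pos ⟨by positivity, by exact_mod_cast n.2⟩]
  rfl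

theorem zext_conj {W : ℕ} (v : Fin W → ℂ) (j : ℤ) :
    zext (fun n => conj (v n)) j = conj (zext v j) := by
  unfold zext
  split <;> simp

theorem tsum_zext_mul {W : ℕ} (v : Fin W → ℂ) (f : ℤ → ℂ) :
    ∑' j : ℤ, zext v j * f j = ∑ n : Fin W, v n * f (n : ℕ) := by
  have hinj : Function.Injective fun n : Fin W => ((n : ℕ) : ℤ) :=
    Nat.cast_injective.comp Fin.val_injective
  have hsupp : Function.support (fun j => zext v j * f j) ⊆
      Set.range fun n : Fin W => ((n : ℕ) : ℤ) := by
    intro j hj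
    by_cases h : 0 ≤ j ∧ j < W
    · exact ⟨⟨j.toNat, by omega⟩, by simp [h.1]⟩
    · simp [zext, dif_neg h] at hj
  rw [← hinj.tsum_eq hsupp, tsum_fintype]
  simp only [zext_natCast_s2]

/-- Over `ℤ` the finitely supported `tsum` is invariant under any reindexing (`Equiv.tsum_eq`),
so the reflection below needs no bookkeeping of index ranges. -/
theorem stft_eq_tsum {N W : ℕ} (x : Fin N → ℂ) (w : Fin W → ℂ) (L : ℕ) (k : ℤ) (m : ℕ) :
    stft x w L k m = ∑' j : ℤ, zext x j * zext w (m * L - j) * dftPhase N k j := by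
  simp only [mul_assoc, tsum_zext_mul, stft, dftPhase]
  push_cast
  rfl

theorem stft_conj_swap {N : ℕ} (x w : Fin N → ℂ) (L : ℕ) (k : ℤ) (m : ℕ) :
    stft (fun n => conj (w n)) (fun n => conj (x n)) L k m =
      dftPhase N k (m * L) * conj (stft x w L k m) := by
  rw [stft_eq_tsum, stft_eq_tsum, conj_tsum, ← tsum_mul_left,
    ← (Equiv.subLeft ((m : ℤ) * L)).tsum_eq]
  congr 1
  ext j
  simp only [Equiv.subLeft_apply, sub_sub_cancel, zext_conj, dftPhase_sub, map_mul]
  ring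

theorem blind_stft_conjugate_swap_ambiguity_general
    {N L : ℕ}
    (x w x' w' : Fin N → ℂ)
    (hx' : ∀ n : Fin N, x' n = (starRingEnd ℂ) (w n))
    (hw' : ∀ n : Fin N, w' n = (starRingEnd ℂ) (x n))
    (k : ℤ) (m : ℕ) :
    ‖stft x' w' L k m‖ = ‖stft x w L k m‖ := by
  rw [funext hx', funext hw', stft_conj_swap, norm_mul, norm_dftPhase, one_mul, norm_conj]

/-- when `N = W`, the pair `(conj w, conj x)` has the same phaseless
blind STFT measurements as `(x, w)`. -/
theorem blind_stft_conjugate_swap_ambiguity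
    {N L : ℕ} (hL : 0 < L) (hLN : L < N)
    (x w x' w' : Fin N → ℂ)
    (hx' : ∀ n : Fin N, x' n = (starRingEnd ℂ) (w n))
    (hw' : ∀ n : Fin N, w' n = (starRingEnd ℂ) (x n))
    (k : ℤ) (m : ℕ) (hm : m < (N + N - 1 + L - 1) / L) :
    ‖stft x' w' L k m‖ = ‖stft x w L k m‖ :=
  blind_stft_conjugate_swap_ambiguity_general x w x' w' hx' hw' k m
end

section
/- Let x ∈ ℂ^N and w ∈ ℂ^W with N > L and W > L, and suppose x[i] ≠ 0 and w[i] ≠ 0 for all 0 ≤ i ≤ L. Suppose η_1, η_2 ∈ ℂ with |η_1| = |η_2| = 1 and nonzero complex numbers λ = (λ_0,…,λ_{L−1}) satisfy (η_1,η_2,λ)∘(x,w) = (x,w). Then η_1 = 1, η_2^L = 1, and λ_j = η_2^{−j} for every j = 0,…,L−1. In other words, the stabilizer of such a pair (x,w) under this action is the subgroup {(1, ω, (1, ω^{−1},…,ω^{−(L−1)})) : ω^L = 1}, isomorphic to the group μ_L of L-th roots of unity, so the quotient of S¹ × S¹ × (ℂ^×)^L by μ_L acts generically freely. -/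
/-- the stabilizer of a pair `(x,w)` (with `x[i] ≠ 0`, `w[i] ≠ 0`
for `0 ≤ i ≤ L`) under the action
`(η₁,η₂,λ)∘(x,w) = (n ↦ η₁·η₂ⁿ·λ_{n mod L}·x[n], n ↦ η₂ⁿ·λ_{(L−n) mod L}⁻¹·w[n])`
consists exactly of the elements with `η₁ = 1`, `η₂^L = 1` and `λ_j = η₂^{−j}`,
i.e. it is isomorphic to `μ_L`, so the quotient of `S¹ × S¹ × (ℂ^×)^L` by `μ_L`
acts generically freely. -/
theorem blind_stft_stabilizer
    {N W L : ℕ} (hL : 0 < L) (hLN : L < N) (hLW : L < W)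
    (x : Fin N → ℂ) (w : Fin W → ℂ)
    (hxw : ∀ i : ℕ, ∀ _ : i ≤ L, x ⟨i, by omega⟩ ≠ 0 ∧ w ⟨i, by omega⟩ ≠ 0)
    (η₁ η₂ : ℂ)
    (lam : Fin L → ℂ)
    (hfixx : ∀ n : Fin N,
      η₁ * η₂ ^ (n : ℕ) * lam ⟨(n : ℕ) % L, Nat.mod_lt _ hL⟩ * x n = x n)
    (hfixw : ∀ n : Fin W,
      η₂ ^ (n : ℕ) * (lam ⟨(L - (n : ℕ) % L) % L, Nat.mod_lt _ hL⟩)⁻¹ * w n = w n) :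
    η₁ = 1 ∧ η₂ ^ L = 1 ∧ ∀ j : Fin L, lam j = (η₂ ^ (j : ℕ))⁻¹ := by
  have multiplier_eq_one (i : ℕ) (hi : i ≤ L) :
      η₁ * η₂ ^ i * lam ⟨i % L, Nat.mod_lt _ hL⟩ = 1 :=
    (mul_eq_right₀ (hxw i hi).1).mp (hfixx ⟨i, by omega⟩)
  have lam_zero : lam ⟨0, hL⟩ = 1 := by
    have h := (mul_eq_right₀ (hxw 0 L.zero_le).2).mp (hfixw ⟨0, by omega⟩)
    simpa using h
  have hη₁ : η₁ = 1 := by simpa [lam_zero] using multiplier_eq_one 0 L.zero_le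
  refine ⟨hη₁, ?_, fun j => ?_⟩
  · simpa [hη₁, lam_zero] using multiplier_eq_one L le_rfl
  · have hj := multiplier_eq_one j j.isLt.le
    simp only [hη₁, one_mul, Nat.mod_eq_of_lt j.isLt] at hj
    exact eq_inv_of_mul_eq_one_right hj
end

section
/- Let L ≥ 1 and let y_2 ∈ ℂ^{2L+1} be the vector with y_2[0] = y_2[L] = y_2[2L] = 1 and y_2[n] = 0 otherwise, so that Σ_{n=0}^{2L} y_2[n]·η^n = 1 + η^L + η^{2L}. If y' ∈ ℂ^{2L+1} satisfies |Σ_{n=0}^{2L} y'[n]·η^n| = |1 + η^L + η^{2L}| for every η ∈ S¹, then y' = e^{iθ}·y_2 for some real θ. -/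
/-!
Write `a n` for the coefficients of `p = ∑ y' n Xⁿ` and `q = 1 + X^L + X^{2L}`. Equality of `|p|`
and `|q|` on the unit circle is a polynomial identity `p · X^{2L} p̄(1/X) = q · X^{2L} q̄(1/X)`, so
`p` has the autocorrelations of `q`: `∑ |a n|² = 3`, `∑ a (m + L) · ā m = 2`, `a (2L) · ā 0 = 1`.
The last gives `|a 0|² |a (2L)|² = 1`, hence `|a 0|² + |a (2L)|² ≥ 2`, and the middle one gives
`|a L|² ≥ 1` by the triangle inequality and AM–GM. Since the total mass is `3`, all these are
equalities: the other coefficients vanish, `|a 0| = |a L| = |a (2L)| = 1`, and the equality cases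
force `a 0 = a L = a (2L)`.
-/

open Complex ComplexConjugate Polynomial Finset

lemma setOf_norm_eq_one_infinite : {z : ℂ | ‖z‖ = 1}.Infinite := by
  have h : (Circle.exp '' Set.Icc 0 1).Infinite :=
    (Set.Icc_infinite zero_lt_one).image (Circle.exp_injOn_Icc (by linarith [Real.pi_gt_three]))
  refine Set.Infinite.mono ?_ (h.image Subtype.val_injective.injOn)
  rintro _ ⟨z, -, rfl⟩
  exact Circle.norm_coe z

lemma sum_range_eq_add_sum_sdiff {M : Type*} [AddCommMonoid M] {L : ℕ} (hL : 1 ≤ L)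
    (f : ℕ → M) :
    ∑ n ∈ range (2 * L + 1), f n =
      f 0 + f L + f (2 * L) + ∑ n ∈ range (2 * L + 1) \ {0, L, 2 * L}, f n := by
  have hsub : ({0, L, 2 * L} : Finset ℕ) ⊆ range (2 * L + 1) := by
    intro n hn
    simp only [mem_insert, mem_singleton] at hn
    exact mem_range.2 (by omega)
  rw [← sum_sdiff hsub, sum_insert (by simp; omega), sum_insert (by simp; omega),
    sum_singleton, add_comm]
  simp only [add_assoc]

lemma coeff_one_add_X_pow_add_X_pow {R : Type*} [Semiring R] {L : ℕ} (hL : 1 ≤ L) (n : ℕ) :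
    (1 + X ^ L + X ^ (2 * L) : R[X]).coeff n =
      if n = 0 ∨ n = L ∨ n = 2 * L then 1 else 0 := by
  simp only [coeff_add, coeff_one, coeff_X_pow]
  split_ifs <;> simp_all

/-- The autocorrelation at lag `j` of a sequence supported in `[0, d]`. -/
def autocorr (a : ℕ → ℂ) (d j : ℕ) : ℂ :=
  ∑ m ∈ range (d + 1), a (m + j) * conj (a m)

lemma autocorr_zero (a : ℕ → ℂ) (d : ℕ) :
    autocorr a d 0 = ∑ m ∈ range (d + 1), ((‖a m‖ ^ 2 : ℝ) : ℂ) := by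
  simp only [autocorr, add_zero, mul_conj', ofReal_pow]

section autocorr

variable {a : ℕ → ℂ} {d : ℕ}

lemma autocorr_eq_sum_range_sub (ha : ∀ n, d < n → a n = 0) {j : ℕ} (hj : j ≤ d) :
    autocorr a d j = ∑ m ∈ range (d - j + 1), a (m + j) * conj (a m) := by
  refine (sum_subset (range_subset_range.2 (by omega)) fun m hm hm' => ?_).symm
  rw [mem_range] at hm hm'
  rw [ha (m + j) (by omega), zero_mul]

lemma autocorr_self (ha : ∀ n, d < n → a n = 0) : autocorr a d d = a d * conj (a 0) := by
  rw [autocorr_eq_sum_range_sub ha le_rfl, Nat.sub_self, sum_range_one, zero_add]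

end autocorr

/-- `X ^ d * p̄ (X⁻¹)`, for `p` of degree at most `d`. -/
noncomputable def conjReflect (d : ℕ) (p : ℂ[X]) : ℂ[X] :=
  ∑ m ∈ range (d + 1), C (conj (p.coeff m)) * X ^ (d - m)

lemma coeff_mul_conjReflect (p : ℂ[X]) (d j : ℕ) :
    (p * conjReflect d p).coeff (d + j) = autocorr p.coeff d j := by
  simp only [conjReflect, mul_sum, finsetSum_coeff, autocorr]
  refine sum_congr rfl fun m hm => ?_
  rw [mem_range] at hm
  rw [mul_left_comm, coeff_C_mul, coeff_mul_X_pow', if_pos (by omega),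
    show d + j - (d - m) = m + j by omega, mul_comm]

lemma eval_conjReflect {p : ℂ[X]} {d : ℕ} (hp : p.natDegree ≤ d) {η : ℂ} (hη : ‖η‖ = 1) :
    (conjReflect d p).eval η = η ^ d * conj (p.eval η) := by
  have hη0 : η ≠ 0 := norm_ne_zero_iff.1 (by rw [hη]; exact one_ne_zero)
  have hconj : conj η = η⁻¹ := (inv_eq_conj hη).symm
  rw [eval_eq_sum_range' (Nat.lt_succ_of_le hp), map_sum, mul_sum, conjReflect, eval_finsetSum]
  refine sum_congr rfl fun m hm => ?_
  rw [mem_range] at hm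
  rw [eval_C_mul, eval_X_pow, map_mul, map_pow, hconj, pow_sub₀ _ hη0 (by omega), inv_pow]
  ring

lemma eval_mul_conjReflect {p : ℂ[X]} {d : ℕ} (hp : p.natDegree ≤ d) {η : ℂ} (hη : ‖η‖ = 1) :
    (p * conjReflect d p).eval η = η ^ d * ((‖p.eval η‖ ^ 2 : ℝ) : ℂ) := by
  rw [eval_mul, eval_conjReflect hp hη, mul_left_comm, mul_conj', ofReal_pow]

theorem autocorr_eq_of_norm_eval_eq {p q : ℂ[X]} {d : ℕ} (hp : p.natDegree ≤ d)
    (hq : q.natDegree ≤ d) (h : ∀ η : ℂ, ‖η‖ = 1 → ‖p.eval η‖ = ‖q.eval η‖) (j : ℕ) :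
    autocorr p.coeff d j = autocorr q.coeff d j := by
  have hpq : p * conjReflect d p = q * conjReflect d q :=
    eq_of_infinite_eval_eq _ _ <| setOf_norm_eq_one_infinite.mono fun η hη => by
      simp only [Set.mem_ofPred_eq] at hη ⊢
      rw [eval_mul_conjReflect hp hη, eval_mul_conjReflect hq hη, h η hη]
  rw [← coeff_mul_conjReflect, hpq, coeff_mul_conjReflect]

lemma two_mul_norm_sum_le (a : ℕ → ℂ) (L : ℕ) :
    2 * ‖∑ m ∈ range (L + 1), a (m + L) * conj (a m)‖ ≤
      ‖a L‖ ^ 2 + ∑ m ∈ range (2 * L + 1), ‖a m‖ ^ 2 := by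
  calc 2 * ‖∑ m ∈ range (L + 1), a (m + L) * conj (a m)‖
      ≤ ∑ m ∈ range (L + 1), 2 * (‖a (m + L)‖ * ‖a m‖) := by
        rw [← mul_sum]
        refine mul_le_mul_of_nonneg_left ((norm_sum_le _ _).trans_eq (sum_congr rfl fun m _ => ?_))
          zero_le_two
        rw [norm_mul, RCLike.norm_conj]
    _ ≤ ∑ m ∈ range (L + 1), (‖a (m + L)‖ ^ 2 + ‖a m‖ ^ 2) :=
        sum_le_sum fun m _ => by rw [← mul_assoc]; exact two_mul_le_add_sq _ _
    _ = ‖a L‖ ^ 2 + ∑ m ∈ range (2 * L + 1), ‖a m‖ ^ 2 := by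
        rw [sum_add_distrib, sum_range_succ (fun m => ‖a m‖ ^ 2) L,
          show 2 * L + 1 = L + (L + 1) by ring, sum_range_add (fun m => ‖a m‖ ^ 2) L (L + 1)]
        simp only [add_comm L]
        ring

lemma eq_one_of_sum_eq_three {L : ℕ} (hL : 1 ≤ L) {s : ℕ → ℝ} (hs : ∀ n, 0 ≤ s n)
    (hsum : ∑ n ∈ range (2 * L + 1), s n = 3) (hprod : s 0 * s (2 * L) = 1) (hmid : 1 ≤ s L) :
    s 0 = 1 ∧ s L = 1 ∧ s (2 * L) = 1 ∧ ∀ n ∈ range (2 * L + 1) \ {0, L, 2 * L}, s n = 0 := by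
  rw [sum_range_eq_add_sum_sdiff hL] at hsum
  have hrest := sum_nonneg fun n (_ : n ∈ range (2 * L + 1) \ {0, L, 2 * L}) => hs n
  have hends : 2 ≤ s 0 + s (2 * L) := by
    nlinarith [sq_nonneg (s 0 - s (2 * L)), hs 0, hs (2 * L)]
  have h0 : s 0 = 1 := by nlinarith [sq_nonneg (s 0 - s (2 * L))]
  refine ⟨h0, by linarith, by nlinarith, (sum_eq_zero_iff_of_nonneg fun n _ => hs n).1 ?_⟩
  linarith

lemma eq_of_norm_eq_one_of_mul_conj_add_eq_two {z w : ℂ} (hz : ‖z‖ = 1) (hw : ‖w‖ = 1)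
    (h : z * conj w + w * conj z = 2) : z = w := by
  have hz' : z * conj z = 1 := by rw [mul_conj', hz]; simp
  have hw' : w * conj w = 1 := by rw [mul_conj', hw]; simp
  have hzw : (z - w) * conj (z - w) = 0 := by
    rw [map_sub]
    linear_combination hz' + hw' - h
  rw [mul_eq_zero, map_eq_zero, or_self, sub_eq_zero] at hzw
  exact hzw

lemma norm_eq_one_of_autocorr {L : ℕ} (hL : 1 ≤ L) {a : ℕ → ℂ} (ha : ∀ n, 2 * L < n → a n = 0)
    (h0 : autocorr a (2 * L) 0 = 3) (hmid : autocorr a (2 * L) L = 2)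
    (htop : autocorr a (2 * L) (2 * L) = 1) :
    ‖a 0‖ = 1 ∧ ‖a L‖ = 1 ∧ ‖a (2 * L)‖ = 1 ∧ ∀ n ∉ ({0, L, 2 * L} : Finset ℕ), a n = 0 := by
  have hsum : ∑ n ∈ range (2 * L + 1), ‖a n‖ ^ 2 = 3 := by
    rw [autocorr_zero] at h0
    exact_mod_cast h0
  have hprod : ‖a 0‖ ^ 2 * ‖a (2 * L)‖ ^ 2 = 1 := by
    rw [autocorr_self ha] at htop
    rw [← mul_pow, mul_comm, ← RCLike.norm_conj (a 0), ← norm_mul, htop, norm_one, one_pow]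
  have hmid' : 1 ≤ ‖a L‖ ^ 2 := by
    have hbound := two_mul_norm_sum_le a L
    rw [autocorr_eq_sum_range_sub ha (by omega), show 2 * L - L = L by omega] at hmid
    rw [hmid, Complex.norm_two, hsum] at hbound
    linarith
  obtain ⟨hn0, hnL, hn2L, hrest⟩ := eq_one_of_sum_eq_three hL (s := fun n => ‖a n‖ ^ 2)
    (fun n => by positivity) hsum hprod hmid'
  simp only [pow_eq_one_iff_of_nonneg (norm_nonneg _) two_ne_zero] at hn0 hnL hn2L
  refine ⟨hn0, hnL, hn2L, fun n hn => ?_⟩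
  by_cases hn' : n ≤ 2 * L
  · simpa using hrest n (mem_sdiff.2 ⟨mem_range.2 (by omega), hn⟩)
  · exact ha n (by omega)

lemma eq_of_autocorr {L : ℕ} (hL : 1 ≤ L) {a : ℕ → ℂ}
    (hoff : ∀ n ∉ ({0, L, 2 * L} : Finset ℕ), a n = 0) (hn0 : ‖a 0‖ = 1) (hnL : ‖a L‖ = 1)
    (hn2L : ‖a (2 * L)‖ = 1) (hmid : autocorr a (2 * L) L = 2)
    (htop : autocorr a (2 * L) (2 * L) = 1) :
    a L = a 0 ∧ a (2 * L) = a 0 := by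
  have ha : ∀ n, 2 * L < n → a n = 0 := fun n hn => hoff n (by simp; omega)
  rw [autocorr_self ha] at htop
  have htop_eq : a (2 * L) = a 0 := by
    refine eq_of_norm_eq_one_of_mul_conj_add_eq_two hn2L hn0 ?_
    have htop_conj := congrArg conj htop
    rw [map_mul, conj_conj, map_one] at htop_conj
    linear_combination htop + htop_conj
  have hrest : ∑ m ∈ range (2 * L + 1) \ {0, L, 2 * L}, a (m + L) * conj (a m) = 0 :=
    sum_eq_zero fun m hm => by rw [hoff m (mem_sdiff.1 hm).2, map_zero, mul_zero]
  rw [autocorr, sum_range_eq_add_sum_sdiff hL, hrest, ha (2 * L + L) (by omega), zero_add,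
    ← two_mul, htop_eq] at hmid
  exact ⟨eq_of_norm_eq_one_of_mul_conj_add_eq_two hnL hn0 (by linear_combination hmid), htop_eq⟩

lemma autocorr_one_add_X_pow_add_X_pow {L : ℕ} (hL : 1 ≤ L) (j : ℕ) :
    autocorr (1 + X ^ L + X ^ (2 * L) : ℂ[X]).coeff (2 * L) j =
      (1 + X ^ L + X ^ (2 * L) : ℂ[X]).coeff j + (1 + X ^ L + X ^ (2 * L) : ℂ[X]).coeff (j + L) +
        (1 + X ^ L + X ^ (2 * L) : ℂ[X]).coeff (j + 2 * L) := by
  rw [autocorr, sum_range_eq_add_sum_sdiff hL, sum_eq_zero fun m hm => ?_]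
  · simp only [coeff_one_add_X_pow_add_X_pow hL]
    simp [add_comm j]
  · rw [coeff_one_add_X_pow_add_X_pow hL m, if_neg (by simpa using (mem_sdiff.1 hm).2), map_zero,
      mul_zero]

theorem eq_C_mul_of_norm_eval_eq {L : ℕ} (hL : 1 ≤ L) {p : ℂ[X]} (hp : p.natDegree ≤ 2 * L)
    (h : ∀ η : ℂ, ‖η‖ = 1 → ‖p.eval η‖ = ‖(1 + X ^ L + X ^ (2 * L) : ℂ[X]).eval η‖) :
    ∃ c : ℂ, ‖c‖ = 1 ∧ p = C c * (1 + X ^ L + X ^ (2 * L)) := by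
  have hq : (1 + X ^ L + X ^ (2 * L) : ℂ[X]).natDegree ≤ 2 * L := by
    refine natDegree_add_le_of_degree_le (natDegree_add_le_of_degree_le ?_ ?_) ?_
    · simp
    · exact (natDegree_X_pow_le L).trans (by omega)
    · exact natDegree_X_pow_le _
  have hcorr j := (autocorr_eq_of_norm_eval_eq hp hq h j).trans
    (autocorr_one_add_X_pow_add_X_pow hL j)
  simp only [coeff_one_add_X_pow_add_X_pow hL] at hcorr
  have ha : ∀ n, 2 * L < n → p.coeff n = 0 := fun n hn => coeff_eq_zero_of_natDegree_lt (by omega)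
  have h0 : autocorr p.coeff (2 * L) 0 = 3 := by
    rw [hcorr, if_pos (by omega), if_pos (by omega), if_pos (by omega)]
    norm_num
  have hmid : autocorr p.coeff (2 * L) L = 2 := by
    rw [hcorr, if_pos (by omega), if_pos (by omega), if_neg (by omega)]
    norm_num
  have htop : autocorr p.coeff (2 * L) (2 * L) = 1 := by
    rw [hcorr, if_pos (by omega), if_neg (by omega), if_neg (by omega)]
    norm_num
  obtain ⟨hn0, hnL, hn2L, hoff⟩ := norm_eq_one_of_autocorr hL ha h0 hmid htop
  obtain ⟨hLeq, h2Leq⟩ := eq_of_autocorr hL hoff hn0 hnL hn2L hmid htop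
  refine ⟨p.coeff 0, hn0, ext fun n => ?_⟩
  rw [coeff_C_mul, coeff_one_add_X_pow_add_X_pow hL]
  split_ifs with hn
  · rcases hn with rfl | rfl | rfl <;> simp [hLeq, h2Leq]
  · rw [mul_zero, hoff n (by simpa using hn)]

/-- any vector `y' ∈ ℂ^{2L+1}` whose Fourier magnitudes on the
unit circle agree with those of `1 + η^L + η^{2L}` is a global phase multiple
of the vector `y₂` with `y₂[0] = y₂[L] = y₂[2L] = 1` and zeros elsewhere. -/
theorem cyclotomic_vector_rigidity (L : ℕ) (hL : 1 ≤ L)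
    (y₂ : Fin (2 * L + 1) → ℂ)
    (hy₂ : ∀ n : Fin (2 * L + 1),
      y₂ n = if (n : ℕ) = 0 ∨ (n : ℕ) = L ∨ (n : ℕ) = 2 * L then 1 else 0)
    (y' : Fin (2 * L + 1) → ℂ)
    (h : ∀ η : ℂ, ‖η‖ = 1 →
      ‖∑ n : Fin (2 * L + 1), y' n * η ^ (n : ℕ)‖ =
      ‖1 + η ^ L + η ^ (2 * L)‖) :
    ∃ θ : ℝ, ∀ n, y' n = Complex.exp (θ * Complex.I) * y₂ n := by
  set p : ℂ[X] := ∑ n : Fin (2 * L + 1), C (y' n) * X ^ (n : ℕ)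
  have hp : p.natDegree ≤ 2 * L := natDegree_sum_le_of_forall_le _ _ fun n _ =>
    (natDegree_C_mul_X_pow_le _ _).trans (by omega)
  have hcoeff (n : Fin (2 * L + 1)) : p.coeff n = y' n := by
    simp [p, finsetSum_coeff, Fin.val_inj]
  obtain ⟨c, hc, hpc⟩ := eq_C_mul_of_norm_eval_eq hL hp fun η hη => by
    simpa [p, eval_finsetSum] using h η hη
  have hexp : exp (arg c * I) = c := by simpa [hc] using norm_mul_exp_arg_mul_I c
  refine ⟨arg c, fun n => ?_⟩
  rw [hexp, ← hcoeff, hpc, coeff_C_mul, coeff_one_add_X_pow_add_X_pow hL, hy₂]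
end

section
/- Let L ≥ 1 and let y_1 ∈ ℂ^{L+1} be the vector with y_1[0] = 1, y_1[L] = 2, and y_1[n] = 0 for 0 < n < L. If y' ∈ ℂ^{L+1} satisfies |Σ_{n=0}^{L} y'[n]·η^n|² = |1 + 2η^L|² for every η ∈ S¹, then either y' has at least 3 nonzero entries, or y' = e^{iθ}·y_1 for some real θ, or y' = e^{iθ}·ỹ_1 for some real θ, where ỹ_1 is the vector with ỹ_1[0] = 2, ỹ_1[L] = 1, and ỹ_1[n] = 0 for 0 < n < L. -/
/-!
On the unit circle `η⁻¹ = conj η`, so the intensity `|P(η)|²` of `P(η) = ∑ yₙ ηⁿ`, multiplied by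
`η^L`, is the value of the polynomial `P(X) · ∑ conj(yₘ) X^(L-m)`. Equal intensities on the
(infinite) circle therefore force equal polynomials, i.e. equal autocorrelations. For `y'` versus
`y₁` the top coefficient gives `y'_L · conj y'_0 = 2` and the middle one `∑ |y'ₙ|² = 5`. Hence
`y'_0, y'_L ≠ 0`; if fewer than three entries are nonzero, `y'` lives on `{0, L}`, the numbers
`|y'_0|², |y'_L|²` are the roots `1, 4` of `t² - 5t + 4`, and the cross term fixes the relative
phase.
-/

open Complex BigOperators

open Polynomial ComplexConjugate

section TwoSpike

variable {M : Type*} {L : ℕ}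

def twoSpike [Zero M] (a b : M) (n : Fin (L + 1)) : M :=
  if (n : ℕ) = 0 then a else if (n : ℕ) = L then b else 0

@[simp]
theorem twoSpike_zero [Zero M] (a b : M) : twoSpike (L := L) a b 0 = a := if_pos rfl

@[simp]
theorem twoSpike_last [Zero M] (hL : L ≠ 0) (a b : M) : twoSpike a b (Fin.last L) = b := by
  simp [twoSpike, hL]

theorem twoSpike_of_ne [Zero M] (a b : M) {n : Fin (L + 1)} (h0 : n ≠ 0) (hl : n ≠ Fin.last L) :
    twoSpike a b n = 0 := by
  rw [twoSpike, if_neg (Fin.val_ne_zero_iff.mpr h0),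
    if_neg (by simpa using Fin.val_ne_iff.mpr hl)]

theorem mul_twoSpike [MulZeroClass M] (c a b : M) (n : Fin (L + 1)) :
    c * twoSpike a b n = twoSpike (c * a) (c * b) n := by
  simp only [twoSpike, mul_ite, mul_zero]

theorem sum_twoSpike_mul [Semiring M] (hL : L ≠ 0) (a b : M) (g : Fin (L + 1) → M) :
    ∑ n, twoSpike a b n * g n = a * g 0 + b * g (Fin.last L) := by
  classical
  have h0l : (0 : Fin (L + 1)) ≠ Fin.last L := Fin.ext_iff.not.mpr (by simp [Ne.symm hL])
  rw [← Finset.sum_subset (Finset.subset_univ {0, Fin.last L}), Finset.sum_pair h0l,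
    twoSpike_zero, twoSpike_last hL]
  intro n _ hn
  simp only [Finset.mem_insert, Finset.mem_singleton, not_or] at hn
  rw [twoSpike_of_ne a b hn.1 hn.2, zero_mul]

theorem eq_twoSpike_of_ncard_lt_three [Zero M] (hL : L ≠ 0) {y : Fin (L + 1) → M}
    (h0 : y 0 ≠ 0) (hl : y (Fin.last L) ≠ 0) (hcard : {n | y n ≠ 0}.ncard < 3) :
    y = twoSpike (y 0) (y (Fin.last L)) := by
  have h0l : (0 : Fin (L + 1)) ≠ Fin.last L := Fin.ext_iff.not.mpr (by simp [Ne.symm hL])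
  funext n
  by_cases hn0 : n = 0
  · simp [hn0]
  by_cases hnl : n = Fin.last L
  · simp [hnl, hL]
  rw [twoSpike_of_ne _ _ hn0 hnl]
  by_contra hn
  have : ({0, Fin.last L, n} : Set (Fin (L + 1))).ncard = 3 :=
    Set.ncard_eq_three.mpr ⟨_, _, _, h0l, Ne.symm hn0, Ne.symm hnl, rfl⟩
  have hsub : ({0, Fin.last L, n} : Set (Fin (L + 1))) ⊆ {n | y n ≠ 0} := by
    rintro m (rfl | rfl | rfl) <;> assumption
  exact hcard.not_ge (this ▸ Set.ncard_le_ncard hsub)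

end TwoSpike

section Autocorrelation

variable {N : ℕ}

/-- Its coefficient of `X ^ (N + k)` is `∑ₙ yₙ · conj yₙ₋ₖ`, the autocorrelation at lag `k`. -/
noncomputable def autocorrelationPoly (y : Fin (N + 1) → ℂ) : ℂ[X] :=
  (∑ n : Fin (N + 1), C (y n) * X ^ (n : ℕ)) * ∑ m : Fin (N + 1), C (conj (y m)) * X ^ (N - m)

theorem eval_autocorrelationPoly (y : Fin (N + 1) → ℂ) {η : ℂ} (hη : ‖η‖ = 1) :
    (autocorrelationPoly y).eval η = η ^ N * (‖∑ n : Fin (N + 1), y n * η ^ (n : ℕ)‖ ^ 2 : ℝ) := by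
  have hη0 : η ≠ 0 := norm_ne_zero_iff.mp (by rw [hη]; exact one_ne_zero)
  have hsecond : ∑ m : Fin (N + 1), conj (y m) * η ^ (N - m) =
      η ^ N * conj (∑ n : Fin (N + 1), y n * η ^ (n : ℕ)) := by
    simp only [map_sum, map_mul, map_pow, ← inv_eq_conj hη, Finset.mul_sum]
    refine Finset.sum_congr rfl fun m _ => ?_
    rw [pow_sub₀ η hη0 (Nat.le_of_lt_succ m.2), inv_pow]
    ring
  simp only [autocorrelationPoly, eval_mul, eval_finsetSum, eval_C, eval_pow, eval_X, hsecond]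
  rw [mul_left_comm, mul_conj, Complex.normSq_eq_norm_sq]

theorem autocorrelationPoly_eq_of_norm_sq_eq {y z : Fin (N + 1) → ℂ}
    (h : ∀ η : ℂ, ‖η‖ = 1 →
      ‖∑ n : Fin (N + 1), y n * η ^ (n : ℕ)‖ ^ 2 = ‖∑ n : Fin (N + 1), z n * η ^ (n : ℕ)‖ ^ 2) :
    autocorrelationPoly y = autocorrelationPoly z := by
  refine eq_of_infinite_eval_eq _ _ (Set.Infinite.mono (fun η hη => ?_)
    ((isPreconnected_sphere (by simp) (0 : ℂ) 1).infinite_of_nontrivial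
      ⟨1, by simp, -1, by simp, by norm_num⟩))
  rw [mem_sphere_zero_iff_norm] at hη
  simp only [Set.mem_ofPred_eq, eval_autocorrelationPoly _ hη, h η hη]

theorem coeff_autocorrelationPoly (y : Fin (N + 1) → ℂ) (k : ℕ) :
    (autocorrelationPoly y).coeff k =
      ∑ n : Fin (N + 1), ∑ m : Fin (N + 1), if k = n + (N - m) then y n * conj (y m) else 0 := by
  simp only [autocorrelationPoly, Finset.sum_mul_sum, finsetSum_coeff]
  refine Finset.sum_congr rfl fun n _ => Finset.sum_congr rfl fun m _ => ?_
  rw [show C (y n) * X ^ (n : ℕ) * (C (conj (y m)) * X ^ (N - m)) =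
      C (y n * conj (y m)) * X ^ (n + (N - m)) by rw [C_mul, pow_add]; ring,
    coeff_C_mul_X_pow]

theorem coeff_two_mul_autocorrelationPoly (y : Fin (N + 1) → ℂ) :
    (autocorrelationPoly y).coeff (2 * N) = y (Fin.last N) * conj (y 0) := by
  rw [coeff_autocorrelationPoly, Finset.sum_eq_single (Fin.last N), Finset.sum_eq_single 0]
  · simp [two_mul]
  · intro m _ hm
    rw [if_neg]
    have := Fin.val_ne_zero_iff.mpr hm
    simp only [Fin.val_last]
    omega
  · simp
  · intro n _ hn
    refine Finset.sum_eq_zero fun m _ => if_neg ?_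
    have := Fin.val_ne_iff.mpr hn
    simp only [Fin.val_last] at this
    omega
  · simp

theorem coeff_autocorrelationPoly_self (y : Fin (N + 1) → ℂ) :
    (autocorrelationPoly y).coeff N = ∑ n : Fin (N + 1), y n * conj (y n) := by
  rw [coeff_autocorrelationPoly]
  refine Finset.sum_congr rfl fun n _ => ?_
  rw [Finset.sum_eq_single n (fun m _ hm => if_neg ?_) (by simp), if_pos (by omega)]
  have := Fin.val_ne_iff.mpr hm
  omega

end Autocorrelation

theorem eq_two_mul_or_eq_two_mul_of_mul_conj {a b : ℂ} (hcross : b * conj a = 2)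
    (henergy : a * conj a + b * conj b = 5) :
    (‖a‖ = 1 ∧ b = 2 * a) ∨ (‖b‖ = 1 ∧ a = 2 * b) := by
  have hsum : ‖a‖ ^ 2 + ‖b‖ ^ 2 = 5 := by
    rw [mul_conj', mul_conj'] at henergy
    exact_mod_cast henergy
  have hprod : ‖a‖ ^ 2 * ‖b‖ ^ 2 = 4 := by
    have := congrArg (‖·‖ ^ 2) hcross
    simp only [norm_mul, RCLike.norm_conj, mul_pow] at this
    norm_num at this
    linarith
  have hcross' : a * conj b = 2 := by simpa [mul_comm, map_ofNat] using congrArg conj hcross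
  have hroots : (‖a‖ ^ 2 - 1) * (‖a‖ ^ 2 - 4) = 0 := by
    linear_combination ‖a‖ ^ 2 * hsum - hprod
  rcases mul_eq_zero.mp hroots with ha | ha
  · have ha : ‖a‖ = 1 := (pow_eq_one_iff_of_nonneg (norm_nonneg a) two_ne_zero).mp (by linarith)
    refine .inl ⟨ha, ?_⟩
    rw [← hcross, mul_assoc, mul_comm (conj a), mul_conj', ha]
    simp
  · have hb : ‖b‖ = 1 := (pow_eq_one_iff_of_nonneg (norm_nonneg b) two_ne_zero).mp (by linarith)
    refine .inr ⟨hb, ?_⟩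
    rw [← hcross', mul_assoc, mul_comm (conj b), mul_conj', hb]
    simp

theorem exp_arg_mul_I_of_norm_eq_one {u : ℂ} (hu : ‖u‖ = 1) : exp (arg u * I) = u := by
  simpa [hu] using norm_mul_exp_arg_mul_I u

/-- any vector `y' ∈ ℂ^{L+1}` whose Fourier intensity on the unit
circle agrees with that of `1 + 2η^L` either has at least 3 nonzero entries, or
is a global phase multiple of `y₁ = (1,0,…,0,2)` or of its conjugate reflection
`ỹ₁ = (2,0,…,0,1)`. -/
theorem two_spike_rigidity (L : ℕ) (hL : 1 ≤ L)
    (y₁ ty₁ : Fin (L + 1) → ℂ)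
    (hy₁ : ∀ n : Fin (L + 1),
      y₁ n = if (n : ℕ) = 0 then 1 else if (n : ℕ) = L then 2 else 0)
    (hty₁ : ∀ n : Fin (L + 1),
      ty₁ n = if (n : ℕ) = 0 then 2 else if (n : ℕ) = L then 1 else 0)
    (y' : Fin (L + 1) → ℂ)
    (h : ∀ η : ℂ, ‖η‖ = 1 →
      ‖∑ n : Fin (L + 1), y' n * η ^ (n : ℕ)‖ ^ 2 =
      ‖1 + 2 * η ^ L‖ ^ 2) :
    3 ≤ Set.ncard {n : Fin (L + 1) | y' n ≠ 0} ∨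
    (∃ θ : ℝ, ∀ n, y' n = Complex.exp (θ * Complex.I) * y₁ n) ∨
    (∃ θ : ℝ, ∀ n, y' n = Complex.exp (θ * Complex.I) * ty₁ n) := by
  have hL0 : L ≠ 0 := by omega
  replace hy₁ : y₁ = twoSpike 1 2 := funext hy₁
  replace hty₁ : ty₁ = twoSpike 2 1 := funext hty₁
  have hauto : autocorrelationPoly y' = autocorrelationPoly y₁ :=
    autocorrelationPoly_eq_of_norm_sq_eq fun η hη => by simp [h η hη, hy₁, sum_twoSpike_mul hL0]
  have hcross : y' (Fin.last L) * conj (y' 0) = 2 := by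
    rw [← coeff_two_mul_autocorrelationPoly, hauto, coeff_two_mul_autocorrelationPoly, hy₁]
    simp [hL0]
  have henergy : ∑ n, y' n * conj (y' n) = 5 := by
    rw [← coeff_autocorrelationPoly_self, hauto, coeff_autocorrelationPoly_self, hy₁,
      sum_twoSpike_mul hL0]
    norm_num [hL0, map_ofNat]
  refine or_iff_not_imp_left.mpr fun hcard => ?_
  obtain ⟨hl, h0⟩ := mul_ne_zero_iff.mp (hcross ▸ two_ne_zero)
  have hy' := eq_twoSpike_of_ncard_lt_three hL0 (by simpa using h0) hl (not_le.mp hcard)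
  rw [hy', sum_twoSpike_mul hL0] at henergy
  rcases eq_two_mul_or_eq_two_mul_of_mul_conj hcross (by simpa [hL0] using henergy)
    with ⟨ha, hb⟩ | ⟨hb, ha⟩
  · refine .inl ⟨arg (y' 0), fun n => ?_⟩
    rw [exp_arg_mul_I_of_norm_eq_one ha, hy₁, mul_twoSpike, mul_one, mul_comm, ← hb, ← hy']
  · refine .inr ⟨arg (y' (Fin.last L)), fun n => ?_⟩
    rw [exp_arg_mul_I_of_norm_eq_one hb, hty₁, mul_twoSpike, mul_one, mul_comm, ← ha, ← hy']
end

section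
/- Let P ≥ 1 and let u, v ∈ ℂ^{P+1}. If |Σ_{n=0}^{P} u[n]·η^n|² = |Σ_{n=0}^{P} v[n]·η^n|² for every η ∈ S¹, then conj(u[0])·u[P] = conj(v[0])·v[P]. That is, the product of the conjugated first entry with the last entry (the top autocorrelation coefficient) is determined by the Fourier intensity function. -/
/-!
Let `p(z) = ∑ u[n] zⁿ` and let `q(z) = z^P · conj (p (1 / conj z))` be its conjugate reciprocal
(`reflect P (p.map conj)`). On the unit circle `p(η) q(η) = η^P |p(η)|²`, so the intensity
determines the polynomial `p q` on an infinite set, hence as a polynomial. Its coefficient of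
`z^(2P)` is `u[P] · conj (u[0])`.
-/

open Complex
open Polynomial ComplexConjugate

theorem sphere_zero_one_infinite : (Metric.sphere (0 : ℂ) 1).Infinite :=
  (isPreconnected_sphere (by simp [Complex.rank_real_complex]) 0 1).infinite_of_nontrivial
    ⟨1, by simp, -1, by simp, by norm_num⟩

section OfFn

variable {R : Type*} [CommSemiring R] [DecidableEq R]

theorem natDegree_ofFn_succ_le {n : ℕ} (w : Fin (n + 1) → R) : (ofFn (n + 1) w).natDegree ≤ n :=
  Nat.lt_succ_iff.mp (ofFn_natDegree_lt n.succ_pos w)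

theorem eval_ofFn {n : ℕ} (w : Fin n → R) (x : R) :
    (ofFn n w).eval x = ∑ i : Fin n, w i * x ^ (i : ℕ) := by
  simp [ofFn_eq_sum_monomial, eval_finsetSum]

end OfFn

section ConjReflect

variable {N : ℕ} {p q : ℂ[X]}

theorem eval_reflect_map_conj (hp : p.natDegree ≤ N) {η : ℂ} (hη : ‖η‖ = 1) :
    (reflect N (p.map (starRingEnd ℂ))).eval η = η ^ N * conj (p.eval η) := by
  have hconj : conj η * η = 1 := by rw [mul_comm, mul_conj, normSq_eq_norm_sq, hη]; simp
  let _ : Invertible (conj η) := invertibleOfRightInverse _ _ hconj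
  have key := eval₂_reflect_mul_pow (starRingEnd ℂ) (conj η) N p hp
  rw [invOf_eq_right_inv hconj, eval₂_at_apply] at key
  rw [reflect_map, eval_map, ← key, mul_comm, mul_assoc, ← mul_pow, hconj, one_pow, mul_one]

theorem eval_mul_reflect_map_conj (hp : p.natDegree ≤ N) {η : ℂ} (hη : ‖η‖ = 1) :
    (p * reflect N (p.map (starRingEnd ℂ))).eval η = η ^ N * (‖p.eval η‖ ^ 2 : ℝ) := by
  rw [eval_mul, eval_reflect_map_conj hp hη, mul_left_comm, mul_conj, normSq_eq_norm_sq]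

theorem coeff_mul_reflect_map_conj (hp : p.natDegree ≤ N) :
    (p * reflect N (p.map (starRingEnd ℂ))).coeff (N + N) = p.coeff N * conj (p.coeff 0) := by
  have hdeg : (reflect N (p.map (starRingEnd ℂ))).natDegree ≤ N :=
    natDegree_reflect_le.trans (max_le le_rfl (natDegree_map_le.trans hp))
  rw [coeff_mul_add_eq_of_natDegree_le hp hdeg, coeff_reflect, revAt_le le_rfl, Nat.sub_self,
    coeff_map]

theorem mul_reflect_map_conj_eq_of_norm_eval_eq (hp : p.natDegree ≤ N) (hq : q.natDegree ≤ N)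
    (h : ∀ η : ℂ, ‖η‖ = 1 → ‖p.eval η‖ = ‖q.eval η‖) :
    p * reflect N (p.map (starRingEnd ℂ)) = q * reflect N (q.map (starRingEnd ℂ)) := by
  refine eq_of_infinite_eval_eq _ _ (sphere_zero_one_infinite.mono fun η hη => ?_)
  rw [mem_sphere_zero_iff_norm] at hη
  rw [Set.mem_ofPred_eq, eval_mul_reflect_map_conj hp hη, eval_mul_reflect_map_conj hq hη, h η hη]

end ConjReflect

theorem top_autocorrelation_determined_general
    (P : ℕ) (u v : Fin (P + 1) → ℂ)
    (h : ∀ η : ℂ, ‖η‖ = 1 →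
      ‖∑ n : Fin (P + 1), u n * η ^ (n : ℕ)‖ ^ 2 =
      ‖∑ n : Fin (P + 1), v n * η ^ (n : ℕ)‖ ^ 2) :
    (starRingEnd ℂ) (u 0) * u (Fin.last P) =
    (starRingEnd ℂ) (v 0) * v (Fin.last P) := by
  have hnorm (η : ℂ) (hη : ‖η‖ = 1) :
      ‖(ofFn (P + 1) u).eval η‖ = ‖(ofFn (P + 1) v).eval η‖ := by
    rw [eval_ofFn, eval_ofFn]
    exact (sq_eq_sq₀ (norm_nonneg _) (norm_nonneg _)).mp (h η hη)
  have hprod := mul_reflect_map_conj_eq_of_norm_eval_eq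
    (natDegree_ofFn_succ_le u) (natDegree_ofFn_succ_le v) hnorm
  have htop := congrArg (coeff · (P + P)) hprod
  simp only [coeff_mul_reflect_map_conj (natDegree_ofFn_succ_le _),
    ofFn_coeff_eq_val_of_lt _ P.lt_succ_self, ofFn_coeff_eq_val_of_lt _ P.succ_pos] at htop
  rw [mul_comm, mul_comm (conj _)]
  exact htop

/-- the top autocorrelation coefficient `conj(u[0])·u[P]` is
determined by the Fourier intensity function on the unit circle. -/
theorem top_autocorrelation_determined
    (P : ℕ) (hP : 1 ≤ P) (u v : Fin (P + 1) → ℂ)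
    (h : ∀ η : ℂ, ‖η‖ = 1 →
      ‖∑ n : Fin (P + 1), u n * η ^ (n : ℕ)‖ ^ 2 =
      ‖∑ n : Fin (P + 1), v n * η ^ (n : ℕ)‖ ^ 2) :
    (starRingEnd ℂ) (u 0) * u (Fin.last P) =
    (starRingEnd ℂ) (v 0) * v (Fin.last P) :=
  top_autocorrelation_determined_general P u v h
end

section
/- Let L ≥ 1 and m ≥ 3 be integers, and let S = {0,…,L−1} ∪ {(m−1)L,…,mL−1} ⊆ ℤ. Then the set of absolute differences satisfies {|a−b| : a, b ∈ S} = {0,…,L−1} ∪ {(m−2)L+1,…,mL−1}, and in particular its cardinality is 3L−1. -/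
open BigOperators

/-- for `S = {0,…,L−1} ∪ {(m−1)L,…,mL−1}` with `m ≥ 3`, the set
of absolute differences is `{0,…,L−1} ∪ {(m−2)L+1,…,mL−1}`, of cardinality
`3L−1`. -/
theorem difference_set_structure (L m : ℕ) (hL : 1 ≤ L) (hm : 3 ≤ m) :
    ((Finset.range L ∪ Finset.Ico ((m - 1) * L) (m * L)) ×ˢ
        (Finset.range L ∪ Finset.Ico ((m - 1) * L) (m * L))).image
          (fun p : ℕ × ℕ => max p.1 p.2 - min p.1 p.2) =
      Finset.range L ∪ Finset.Ico ((m - 2) * L + 1) (m * L) ∧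
    (((Finset.range L ∪ Finset.Ico ((m - 1) * L) (m * L)) ×ˢ
        (Finset.range L ∪ Finset.Ico ((m - 1) * L) (m * L))).image
          (fun p : ℕ × ℕ => max p.1 p.2 - min p.1 p.2)).card = 3 * L - 1 := by
  have h2 : (m - 1) * L = (m - 2) * L + L := by
    nth_rewrite 1 [show m - 1 = (m - 2) + 1 by omega]; ring
  have h1 : m * L = (m - 2) * L + L + L := by
    nth_rewrite 1 [show m = (m - 2) + 1 + 1 by omega]; ring
  have hBL : L ≤ (m - 2) * L := by
    calc L = 1 * L := (one_mul L).symm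
    _ ≤ (m - 2) * L := Nat.mul_le_mul_right L (by omega)
  set B := (m - 2) * L with hB
  rw [h1, h2]
  have heq : ((Finset.range L ∪ Finset.Ico (B + L) (B + L + L)) ×ˢ
        (Finset.range L ∪ Finset.Ico (B + L) (B + L + L))).image
          (fun p : ℕ × ℕ => max p.1 p.2 - min p.1 p.2) =
      Finset.range L ∪ Finset.Ico (B + 1) (B + L + L) := by
    ext x
    simp only [Finset.mem_image, Finset.mem_product, Finset.mem_union, Finset.mem_range,
      Finset.mem_Ico]
    constructor
    · rintro ⟨⟨a, b⟩, ⟨ha, hb⟩, rfl⟩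
      simp only at *
      omega
    · rintro (hx | hx)
      · exact ⟨(x, 0), ⟨Or.inl hx, Or.inl (by omega)⟩, by simp⟩
      · by_cases h : B + L ≤ x
        · exact ⟨(x, 0), ⟨Or.inr ⟨h, by omega⟩, Or.inl (by omega)⟩, by simp⟩
        · refine ⟨(B + L, B + L - x), ⟨Or.inr ⟨le_refl _, by omega⟩, Or.inl (by omega)⟩, ?_⟩
          simp only
          omega
  rw [heq]
  refine ⟨rfl, ?_⟩
  rw [Finset.card_union_of_disjoint, Finset.card_range, Nat.card_Ico]
  · omega
  · rw [Finset.disjoint_left]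
    intro a ha hb
    rw [Finset.mem_range] at ha
    rw [Finset.mem_Ico] at hb
    omega
end
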